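/- Let n, i, h, s be positive integers with s ≥ h, n−1 = Σ_{j=0}^{s−1} n_j·3^j with n_j ∈ {0,1,2}, and i < 3^{h−1}. Then k(n−1, 2·3^{h−1}+i) ≡ (−1)^{n_{h−1}} · k(n−1, i) (mod 3) and k(n−1, 3^{h−1}+i) ≡ (1−n_{h−1}) · k(n−1, i) (mod 3). -/

import Mathlib

/-!
Modulo a prime `p` the weight `2 ^ j` in `leeK` satisfies `2 ^ (b * p ^ k + r) ≡ 2 ^ b * 2 ^ r`,
and by Lucas's theorem `choose (A * p ^ k + B) (b * p ^ k + r) ≡ choose A b * choose B r` for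
`B, r < p ^ k`. Splitting the summation index into its top and bottom digit blocks therefore makes
`leeK` multiplicative: `leeK (A * p ^ k + B) (a * p ^ k + i) ≡ leeK A a * leeK B i`. With `p = 3`
and `a ∈ {1, 2}`, only the digit `d` of `n - 1` at position `h - 1` matters, and
`leeK d 2 ≡ (-1) ^ d`, `leeK d 1 ≡ 1 - d` are checked for `d < 3`.
-/

/-- The cardinality of the `n`-dimensional Lee ball of radius `e`. -/
def leeK (n e : ℕ) : ℕ := ∑ i ∈ Finset.range (min n e + 1), 2 ^ i * n.choose i * e.choose i

open Finset

theorem sum_range_mul_eq_sum_sum {M : Type*} [AddCommMonoid M] (f : ℕ → M) (a q : ℕ) :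
    ∑ j ∈ range (a * q), f j = ∑ b ∈ range a, ∑ r ∈ range q, f (b * q + r) := by
  induction a with
  | zero => simp
  | succ a ih => rw [Nat.succ_mul, sum_range_add, ih, sum_range_succ]

theorem sum_mul_pow_lt_pow {b k : ℕ} {d : ℕ → ℕ} (hd : ∀ j < k, d j < b) :
    ∑ j ∈ range k, d j * b ^ j < b ^ k := by
  induction k with
  | zero => simp
  | succ k ih =>
    have hlow := ih fun j hj => hd j (by omega)
    have hk := hd k (by omega)
    rw [sum_range_succ, pow_succ]
    nlinarith [Nat.mul_le_mul_right (b ^ k) (Nat.succ_le_of_lt hk)]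

theorem sum_mul_pow_div_pow_mod {b s k : ℕ} {d : ℕ → ℕ} (hd : ∀ j < s, d j < b)
    (hk : k < s) :
    (∑ j ∈ range s, d j * b ^ j) / b ^ k % b = d k := by
  have hb : 0 < b := (Nat.zero_le _).trans_lt (hd k hk)
  obtain ⟨t, rfl⟩ : ∃ t, s = k + 1 + t := ⟨s - (k + 1), by omega⟩
  have hhigh : ∑ j ∈ range t, d (k + 1 + j) * b ^ (k + 1 + j)
      = b ^ (k + 1) * ∑ j ∈ range t, d (k + 1 + j) * b ^ j := by
    rw [mul_sum]; exact sum_congr rfl fun j _ => by ring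
  have hlow := sum_mul_pow_lt_pow (k := k) fun j hj => hd j (by omega)
  have hlow' := sum_mul_pow_lt_pow (k := k + 1) fun j hj => hd j (by omega)
  rw [← Nat.mod_mul_right_div_self, ← pow_succ, sum_range_add, hhigh, Nat.add_mul_mod_self_left,
    Nat.mod_eq_of_lt hlow', sum_range_succ, Nat.add_mul_div_right _ _ (pow_pos hb k),
    Nat.div_eq_of_lt hlow, zero_add]

theorem leeK_zero_right (n : ℕ) : leeK n 0 = 1 := by
  simp [leeK]

theorem leeK_eq_sum_range {n e N : ℕ} (hN : e < N) :
    leeK n e = ∑ j ∈ range N, 2 ^ j * n.choose j * e.choose j := by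
  refine sum_subset (range_subset_range.mpr (by omega)) fun j _ hj => ?_
  rcases le_total n e with h | h <;> simp only [mem_range, not_lt] at hj
  · simp [Nat.choose_eq_zero_of_lt (show n < j by omega)]
  · simp [Nat.choose_eq_zero_of_lt (show e < j by omega)]

section ModPrime

variable {p : ℕ} [Fact p.Prime]

theorem choose_cast_eq_choose_mod_mul_choose_div (n k : ℕ) :
    (n.choose k : ZMod p) = (n % p).choose (k % p) * (n / p).choose (k / p) := by
  exact_mod_cast
    (ZMod.intCast_eq_intCast_iff _ _ p).mpr Choose.choose_modEq_choose_mod_mul_choose_div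

theorem choose_mul_pow_add_cast (k A b : ℕ) {B r : ℕ} (hB : B < p ^ k) (hr : r < p ^ k) :
    ((A * p ^ k + B).choose (b * p ^ k + r) : ZMod p) = A.choose b * B.choose r := by
  induction k generalizing B r with
  | zero => simp_all
  | succ k ih =>
    have hp : 0 < p := Fact.out (p := p.Prime) |>.pos
    have hdigits (c C : ℕ) : c * p ^ (k + 1) + C = C % p + p * (c * p ^ k + C / p) := by
      rw [pow_succ]; linarith [Nat.mod_add_div C p]
    have hquot {C : ℕ} (hC : C < p ^ (k + 1)) : C / p < p ^ k :=
      Nat.div_lt_of_lt_mul (by rwa [← pow_succ'])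
    rw [hdigits, hdigits, choose_cast_eq_choose_mod_mul_choose_div]
    simp only [Nat.add_mul_mod_self_left, Nat.mod_mod, Nat.add_mul_div_left _ _ hp,
      Nat.div_eq_of_lt (Nat.mod_lt _ hp), zero_add]
    rw [ih (hquot hB) (hquot hr), choose_cast_eq_choose_mod_mul_choose_div B]
    ring

theorem leeK_mul_pow_add_cast (k A a : ℕ) {B i : ℕ} (hB : B < p ^ k) (hi : i < p ^ k) :
    (leeK (A * p ^ k + B) (a * p ^ k + i) : ZMod p) = leeK A a * leeK B i := by
  have hq : a * p ^ k + i < (a + 1) * p ^ k := by rw [add_mul, one_mul]; omega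
  have hweight (b r : ℕ) : (2 : ZMod p) ^ (b * p ^ k + r) = 2 ^ b * 2 ^ r := by
    rw [pow_add, mul_comm b, pow_mul, ZMod.pow_card_pow]
  rw [leeK_eq_sum_range hq, leeK_eq_sum_range (Nat.lt_succ_self a), leeK_eq_sum_range hi,
    sum_range_mul_eq_sum_sum]
  push_cast
  rw [sum_mul_sum]
  refine sum_congr rfl fun b _ => sum_congr rfl fun r hr => ?_
  rw [hweight, choose_mul_pow_add_cast k A b hB (mem_range.mp hr),
    choose_mul_pow_add_cast k a b hi (mem_range.mp hr)]
  ring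

theorem leeK_cast_eq_leeK_mod_pow (n : ℕ) {k i : ℕ} (hi : i < p ^ k) :
    (leeK n i : ZMod p) = leeK (n % p ^ k) i := by
  have hB := Nat.mod_lt n (pow_pos (Fact.out (p := p.Prime)).pos k)
  have := leeK_mul_pow_add_cast k (n / p ^ k) 0 hB hi
  rwa [zero_mul, zero_add, Nat.div_add_mod', leeK_zero_right, Nat.cast_one, one_mul] at this

theorem leeK_digit_mul_pow_add_cast (n k : ℕ) {a i : ℕ} (ha : a < p) (hi : i < p ^ k) :
    (leeK n (a * p ^ k + i) : ZMod p) = leeK (n / p ^ k % p) a * leeK n i := by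
  have hB := Nat.mod_lt n (pow_pos (Fact.out (p := p.Prime)).pos k)
  calc (leeK n (a * p ^ k + i) : ZMod p)
      = leeK (n / p ^ k) a * leeK (n % p ^ k) i := by
        conv_lhs => rw [← Nat.div_add_mod' n (p ^ k)]
        exact leeK_mul_pow_add_cast k _ a hB hi
    _ = leeK (n / p ^ k % p) a * leeK n i := by
        rw [leeK_cast_eq_leeK_mod_pow (n / p ^ k) (k := 1) (by rwa [pow_one]), pow_one,
          ← leeK_cast_eq_leeK_mod_pow n hi]

end ModPrime

theorem leeK_two_one_cast_of_lt_three {d : ℕ} (hd : d < 3) :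
    (leeK d 2 : ZMod 3) = (-1) ^ d ∧ (leeK d 1 : ZMod 3) = 1 - d := by
  interval_cases d <;> decide

theorem leeK_shift_digit_general (n i h s : ℕ) (hh : 0 < h)
    (hs : h ≤ s) (nd : ℕ → ℕ) (hnd : ∀ j < s, nd j < 3)
    (hrep : n - 1 = ∑ j ∈ Finset.range s, nd j * 3 ^ j)
    (hilt : i < 3 ^ (h - 1)) :
    (leeK (n - 1) (2 * 3 ^ (h - 1) + i) : ℤ) ≡
      (-1) ^ (nd (h - 1)) * leeK (n - 1) i [ZMOD 3] ∧
    (leeK (n - 1) (3 ^ (h - 1) + i) : ℤ) ≡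
      (1 - (nd (h - 1) : ℤ)) * leeK (n - 1) i [ZMOD 3] := by
  have hk : h - 1 < s := by omega
  have hdigit : (n - 1) / 3 ^ (h - 1) % 3 = nd (h - 1) := hrep ▸ sum_mul_pow_div_pow_mod hnd hk
  obtain ⟨htwo, hone⟩ := leeK_two_one_cast_of_lt_three (hnd _ hk)
  refine ⟨(ZMod.intCast_eq_intCast_iff _ _ 3).mp ?_,
    (ZMod.intCast_eq_intCast_iff _ _ 3).mp ?_⟩ <;> push_cast
  · rw [leeK_digit_mul_pow_add_cast _ _ (by norm_num) hilt, hdigit, htwo]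
  · rw [← one_mul (3 ^ (h - 1)), leeK_digit_mul_pow_add_cast _ _ (by norm_num) hilt, hdigit,
      hone]

theorem leeK_shift_digit (n i h s : ℕ) (hn : 0 < n) (hi : 0 < i) (hh : 0 < h)
    (hs : h ≤ s) (nd : ℕ → ℕ) (hnd : ∀ j < s, nd j < 3)
    (hrep : n - 1 = ∑ j ∈ Finset.range s, nd j * 3 ^ j)
    (hilt : i < 3 ^ (h - 1)) :
    (leeK (n - 1) (2 * 3 ^ (h - 1) + i) : ℤ) ≡
      (-1) ^ (nd (h - 1)) * leeK (n - 1) i [ZMOD 3] ∧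
    (leeK (n - 1) (3 ^ (h - 1) + i) : ℤ) ≡
      (1 - (nd (h - 1) : ℤ)) * leeK (n - 1) i [ZMOD 3] :=
  leeK_shift_digit_general n i h s hh hs nd hnd hrep hilt
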